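/- Let K_n be the complete graph on n ≥ 3 vertices, σ a signature of K_n, and t ∈ {0,…,n}. If Δ(K_n) − t is odd, then χ^t_sym(K_n,σ) ≤ Δ(K_n) + 1. If Δ(K_n) − t is even, then χ^t_sym(K_n,σ) = Δ(K_n) + 2 or χ^t_sym(K_n,σ) ≤ Δ(K_n); furthermore χ^t_sym(K_n,σ) = Δ(K_n) + 2 if and only if (K_n,σ) is switching-equivalent to the all-positive signed graph (K_n,+1) or t = n − 1. -/

import Mathlib

/-!
Common framework for symmetric-set colorings of signed graphs
(C. Cappello, E. Steffen, "Symmetric set coloring of signed graphs").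

* A signed graph is a `SimpleGraph V` together with a signature
  `σ : Sym2 V → Bool` (`true` = positive edge, `false` = negative edge);
  only the values of `σ` on edges of `G` matter.
* The canonical symmetric set `S_{2k}^t` with `t` self-inverse elements and
  `k` pairs of non-self-inverse elements is `Sym t k := Fin t ⊕ Fin k × Bool`,
  with negation `symNeg` fixing the `Fin t` part and swapping the Boolean.
-/

namespace SymSet

/-- The canonical symmetric set `S_{2k}^t`. -/
abbrev Sym (t k : ℕ) := Fin t ⊕ Fin k × Bool

/-- Negation on the symmetric set: self-inverse elements are fixed,
the two elements of each pair are exchanged. -/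
def symNeg {t k : ℕ} : Sym t k → Sym t k
  | .inl i => .inl i
  | .inr (i, b) => .inr (i, !b)

/-- Action of a sign on a color: a positive sign acts trivially,
a negative sign acts by negation. -/
def signAct {t k : ℕ} (s : Bool) (x : Sym t k) : Sym t k :=
  if s then x else symNeg x

variable {V : Type*}

/-- A proper `S_{2k}^t`-coloring of the signed graph `(G, σ)`:
`c v ≠ σ(e) · c w` for every edge `e = vw`. -/
def IsProperColoring (G : SimpleGraph V) (σ : Sym2 V → Bool) {t k : ℕ}
    (c : V → Sym t k) : Prop :=
  ∀ ⦃v w : V⦄, G.Adj v w → c v ≠ signAct (σ s(v, w)) (c w)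

/-- `(G, σ)` admits a proper `S_{2k}^t`-coloring. -/
def SymColorable (G : SimpleGraph V) (σ : Sym2 V → Bool) (t k : ℕ) : Prop :=
  ∃ c : V → Sym t k, IsProperColoring G σ c

/-- The symset `t`-chromatic number `χ^t_sym(G, σ)`: the least `t + 2k`
such that `(G, σ)` admits a proper `S_{2k}^t`-coloring. -/
noncomputable def symChromT (G : SimpleGraph V) (σ : Sym2 V → Bool) (t : ℕ) : ℕ :=
  sInf {n | ∃ k, n = t + 2 * k ∧ SymColorable G σ t k}

/-- The chromatic number of the underlying graph, as a natural number. -/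
noncomputable def chrom (G : SimpleGraph V) : ℕ := G.chromaticNumber.toNat

/-- The symset chromatic number `χ_sym(G, σ)`: the minimum of
`χ^t_sym(G, σ)` over `0 ≤ t ≤ χ(G)`. -/
noncomputable def symChrom (G : SimpleGraph V) (σ : Sym2 V → Bool) : ℕ :=
  sInf {n | ∃ t ≤ chrom G, n = symChromT G σ t}

/-- Switching a signature at the vertex set `X = {v | X v = true}`:
the sign of every edge with exactly one end in `X` is reversed. -/
def switch (X : V → Bool) (σ : Sym2 V → Bool) : Sym2 V → Bool :=
  fun e =>
    xor (Sym2.lift ⟨fun u v => xor (X u) (X v), fun u v => by simp [Bool.xor_comm]⟩ e) (σ e)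

/-- Two signatures of `G` are equivalent if one is obtained from the other by a
switching (equality of signs is only required on the edges of `G`). -/
def Equivalent (G : SimpleGraph V) (σ σ' : Sym2 V → Bool) : Prop :=
  ∃ X : V → Bool, ∀ e ∈ G.edgeSet, σ' e = switch X σ e

/-- The number of negative edges of a closed walk. -/
def negCount (σ : Sym2 V → Bool) {G : SimpleGraph V} {u : V} (w : G.Walk u u) : ℕ :=
  (w.edges.filter (fun e => !σ e)).length

/-- `(G, σ)` is balanced: every circuit has sign `+1`,
i.e. an even number of negative edges. -/
def Balanced (G : SimpleGraph V) (σ : Sym2 V → Bool) : Prop :=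
  ∀ ⦃u : V⦄ (w : G.Walk u u), w.IsCycle → Even (negCount σ w)

/-- `(G, σ)` is antibalanced: every even circuit has sign `+1` and every odd
circuit has sign `-1`. -/
def Antibalanced (G : SimpleGraph V) (σ : Sym2 V → Bool) : Prop :=
  ∀ ⦃u : V⦄ (w : G.Walk u u), w.IsCycle → (Even w.length ↔ Even (negCount σ w))

/-- Restriction of a signature to (the induced subgraph on) a vertex subset. -/
def restrict (σ : Sym2 V → Bool) (s : Set V) : Sym2 s → Bool :=
  fun e => σ (Sym2.map Subtype.val e)

/-- A circuit: a connected 2-regular graph. -/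
def IsCircuit (G : SimpleGraph V) [Fintype V] [DecidableRel G.Adj] : Prop :=
  G.Connected ∧ G.IsRegularOfDegree 2

/-- The frustration index `l(G, σ)`: the least number of edges whose deletion
makes the signed graph balanced. -/
noncomputable def frustrationIndex (G : SimpleGraph V) (σ : Sym2 V → Bool) : ℕ :=
  sInf {n | ∃ F : Finset (Sym2 V), F.card = n ∧ Balanced (G.deleteEdges ↑F) σ}

/-- A proper coloring of the signed expansion `±G` (each edge of `G` replaced by
a positive and a negative parallel edge): for each edge `vw` of `G`,
`c v ∉ {c w, -c w}`. -/
def IsProperExpColoring (G : SimpleGraph V) {t k : ℕ} (c : V → Sym t k) : Prop :=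
  ∀ ⦃v w : V⦄, G.Adj v w → c v ≠ c w ∧ c v ≠ symNeg (c w)

/-- The symset `t`-chromatic number of the signed expansion `±G`. -/
noncomputable def expSymChromT (G : SimpleGraph V) (t : ℕ) : ℕ :=
  sInf {n | ∃ k, n = t + 2 * k ∧ ∃ c : V → Sym t k, IsProperExpColoring G c}

end SymSet

namespace SymSet

/-!
In a proper colouring of a complete graph every self-inverse colour is used at most once, and on
the vertices coloured from one pair `±s` the signature is switching equivalent to the all-negative
one, switching at the vertices coloured `-s`. Conversely, peeling off such classes one at a time
builds colourings: any two vertices form one, so `t + 2⌈(n - t)/2⌉` colours suffice, and three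
vertices form one iff they span a negative triangle. A complete graph without negative triangles is
switching equivalent to `(K_n, +1)`; then no pair class has three vertices, so at least `n`, hence
for `n - t` odd `n + 1`, colours are needed. Otherwise, for `n - t` odd and `t ≤ n - 3`, one pair
spent on a negative triangle saves two colours; for `t = n - 1` a pair is needed in any case.
-/

variable {V : Type*} {t k : ℕ}

@[simp]
lemma signAct_inl (s : Bool) (i : Fin t) : signAct s (.inl i : Sym t k) = .inl i := by
  cases s <;> rfl

@[simp]
lemma signAct_inr (s : Bool) (j : Fin k) (b : Bool) :
    signAct s (.inr (j, b) : Sym t k) = .inr (j, xor (!s) b) := by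
  cases s <;> cases b <;> rfl

/-- `true` iff the triangle `abc` has an even number of negative edges. -/
def triangleSign (σ : Sym2 V → Bool) (a b c : V) : Bool :=
  xor (σ s(a, b)) (xor (σ s(a, c)) (σ s(b, c)))

/-- `σ` restricted to `s` is switching equivalent to the all-negative signature. -/
def IsNegativeOn (σ : Sym2 V → Bool) (s : Set V) : Prop :=
  ∃ X : V → Bool, ∀ ⦃v⦄, v ∈ s → ∀ ⦃w⦄, w ∈ s → v ≠ w → σ s(v, w) = xor (X v) (X w)

lemma IsNegativeOn.triangleSign_eq_false {σ : Sym2 V → Bool} {s : Set V} (hs : IsNegativeOn σ s)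
    {a b c : V} (ha : a ∈ s) (hb : b ∈ s) (hc : c ∈ s) (hab : a ≠ b) (hac : a ≠ c)
    (hbc : b ≠ c) : triangleSign σ a b c = false := by
  obtain ⟨X, hX⟩ := hs
  rw [triangleSign, hX ha hb hab, hX ha hc hac, hX hb hc hbc]
  cases X a <;> cases X b <;> cases X c <;> rfl

lemma isNegativeOn_of_card_le_two [DecidableEq V] (σ : Sym2 V → Bool) {T : Finset V}
    (hT : T.card ≤ 2) : IsNegativeOn σ T := by
  rcases Nat.lt_or_eq_of_le hT with hT | hT
  · exact ⟨fun _ => false, fun v hv w hw hvw =>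
      absurd (Finset.card_le_one.mp (by omega) v hv w hw) hvw⟩
  obtain ⟨a, b, hab, rfl⟩ := Finset.card_eq_two.mp hT
  refine ⟨fun x => if x = b then σ s(a, b) else false, ?_⟩
  simp only [Finset.coe_insert, Finset.coe_singleton, Set.mem_insert_iff,
    Set.mem_singleton_iff]
  rintro v (rfl | rfl) w (rfl | rfl) hvw <;> simp_all [Sym2.eq_swap]

lemma isNegativeOn_of_triangleSign_eq_false {σ : Sym2 V → Bool} {a b c : V} (hab : a ≠ b)
    (hac : a ≠ c) (hbc : b ≠ c) (h : triangleSign σ a b c = false) :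
    IsNegativeOn σ {a, b, c} := by
  classical
  refine ⟨fun x => if x = a then false else if x = b then σ s(a, b) else σ s(a, c), ?_⟩
  simp only [Set.mem_insert_iff, Set.mem_singleton_iff]
  have hba : s(b, a) = s(a, b) := Sym2.eq_swap
  have hca : s(c, a) = s(a, c) := Sym2.eq_swap
  have hcb : s(c, b) = s(b, c) := Sym2.eq_swap
  unfold triangleSign at h
  rintro v hv w hw hvw
  rcases hv with hv | hv | hv <;> rcases hw with hw | hw | hw <;> subst v w <;>
    simp only [hab, hac, hbc, hab.symm, hac.symm, hbc.symm, hba, hca, hcb, if_true, if_false,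
      Bool.false_xor, Bool.xor_false, ne_eq, not_true_eq_false] at hvw ⊢ <;>
    revert h <;> cases σ s(a, b) <;> cases σ s(a, c) <;> cases σ s(b, c) <;> decide

def colorClass : Sym t k → Fin t ⊕ Fin k := Sum.map id Prod.fst

@[simp]
lemma colorClass_eq_inl {x : Sym t k} {i : Fin t} : colorClass x = .inl i ↔ x = .inl i := by
  rcases x with _ | _ <;> simp [colorClass]

section ProperColoring

variable {σ : Sym2 V → Bool} {c : V → Sym t k}

lemma IsProperColoring.eq_of_eq_inl (hc : IsProperColoring ⊤ σ c) {v w : V} {i : Fin t}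
    (hv : c v = .inl i) (hw : c w = .inl i) : v = w := by
  by_contra hvw
  exact hc hvw (by rw [hv, hw, signAct_inl])

lemma IsProperColoring.sign_eq_xor (hc : IsProperColoring ⊤ σ c) {v w : V} (hvw : v ≠ w)
    {j : Fin k} {x y : Bool} (hv : c v = .inr (j, x)) (hw : c w = .inr (j, y)) :
    σ s(v, w) = xor x y := by
  have hne := hc hvw
  rw [hv, hw, signAct_inr] at hne
  revert hne
  cases σ s(v, w) <;> cases x <;> cases y <;> simp

lemma IsProperColoring.isNegativeOn_colorClass (hc : IsProperColoring ⊤ σ c) (j : Fin k) :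
    IsNegativeOn σ {v | colorClass (c v) = .inr j} := by
  refine ⟨fun v => Sum.elim (fun _ => false) Prod.snd (c v), fun v hv w hw hvw => ?_⟩
  simp only [Set.mem_ofPred_eq, colorClass] at hv hw
  rcases hcv : c v with _ | ⟨jv, x⟩ <;> rcases hcw : c w with _ | ⟨jw, y⟩ <;>
    simp only [hcv, hcw, Sum.map_inl, Sum.map_inr, reduceCtorEq, Sum.inr.injEq] at hv hw
  subst jv jw
  simpa only [hcv, hcw, Sum.elim_inr] using hc.sign_eq_xor hvw hcv hcw

lemma card_le_of_isProperColoring [Fintype V] (hc : IsProperColoring ⊤ σ c)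
    (hpair : ∀ j : Fin k, (Finset.univ.filter fun v => colorClass (c v) = .inr j).card ≤ 2) :
    Fintype.card V ≤ t + 2 * k := by
  have hsingle :
      ∀ i : Fin t, (Finset.univ.filter fun v => colorClass (c v) = .inl i).card ≤ 1 := by
    intro i
    refine Finset.card_le_one.mpr fun v hv w hw => hc.eq_of_eq_inl (i := i) ?_ ?_ <;>
      simp_all
  calc Fintype.card V
      = ∑ x : Fin t ⊕ Fin k, (Finset.univ.filter fun v => colorClass (c v) = x).card :=
        Finset.card_eq_sum_card_fiberwise fun _ _ => Finset.mem_univ _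
    _ ≤ ∑ _i : Fin t, 1 + ∑ _j : Fin k, 2 := by
        rw [Fintype.sum_sum_type]
        exact add_le_add (Finset.sum_le_sum fun i _ => hsingle i)
          (Finset.sum_le_sum fun j _ => hpair j)
    _ = t + 2 * k := by simp [mul_comm]

end ProperColoring

lemma equivalent_top_iff_triangleSign_eq_true {σ : Sym2 V → Bool} :
    Equivalent (⊤ : SimpleGraph V) σ (fun _ => true) ↔
      ∀ a b c : V, a ≠ b → a ≠ c → b ≠ c → triangleSign σ a b c = true := by
  have hedge : ∀ X : V → Bool, ∀ a b : V,
      (true = switch X σ s(a, b) ↔ σ s(a, b) = !xor (X a) (X b)) := by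
    intro X a b
    simp only [switch, Sym2.lift_mk]
    cases σ s(a, b) <;> cases X a <;> cases X b <;> decide
  simp only [Equivalent, Sym2.forall, SimpleGraph.mem_edgeSet, SimpleGraph.top_adj, hedge]
  constructor
  · rintro ⟨X, hX⟩ a b c hab hac hbc
    rw [triangleSign, hX a b hab, hX a c hac, hX b c hbc]
    cases X a <;> cases X b <;> cases X c <;> rfl
  · intro h
    rcases isEmpty_or_nonempty V with hV | ⟨⟨v₀⟩⟩
    · exact ⟨fun _ => true, fun a => isEmptyElim a⟩
    classical
    refine ⟨fun v => if v = v₀ then false else !σ s(v₀, v), fun a b hab => ?_⟩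
    by_cases ha : a = v₀ <;> by_cases hb : b = v₀
    · exact absurd (ha.trans hb.symm) hab
    · subst ha; simp [hb]
    · subst hb; simp [ha, Sym2.eq_swap]
    · have := h v₀ a b (Ne.symm ha) (Ne.symm hb) hab
      simp only [triangleSign] at this
      simp only [ha, hb, if_false]
      revert this
      cases σ s(v₀, a) <;> cases σ s(v₀, b) <;> cases σ s(a, b) <;> decide

lemma card_le_of_symColorable_zero [Fintype V] {σ : Sym2 V → Bool}
    (h : SymColorable (⊤ : SimpleGraph V) σ t 0) : Fintype.card V ≤ t := by
  obtain ⟨c, hc⟩ := h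
  simpa using card_le_of_isProperColoring hc fun j => j.elim0

/-- A pair class with three vertices would be a negative triangle. -/
lemma card_le_of_symColorable_of_equivalent_top [Fintype V] {σ : Sym2 V → Bool}
    (hσ : Equivalent (⊤ : SimpleGraph V) σ (fun _ => true))
    (h : SymColorable (⊤ : SimpleGraph V) σ t k) : Fintype.card V ≤ t + 2 * k := by
  obtain ⟨c, hc⟩ := h
  refine card_le_of_isProperColoring hc fun j => ?_
  by_contra! h3
  obtain ⟨a, ha, b, hb, d, hd, hab, had, hbd⟩ := Finset.two_lt_card.mp h3
  simp only [Finset.mem_filter, Finset.mem_univ, true_and] at ha hb hd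
  have hneg := (hc.isNegativeOn_colorClass j).triangleSign_eq_false ha hb hd hab had hbd
  rw [equivalent_top_iff_triangleSign_eq_true.mp hσ a b d hab had hbd] at hneg
  simp at hneg

def liftColor : Sym t k → Sym t (k + 1) := Sum.map id (Prod.map Fin.castSucc id)

lemma liftColor_injective : Function.Injective (liftColor : Sym t k → Sym t (k + 1)) := by
  rintro (_ | ⟨_, _⟩) (_ | ⟨_, _⟩) h <;> simp_all [liftColor]

lemma signAct_liftColor (s : Bool) (x : Sym t k) :
    signAct s (liftColor x) = liftColor (signAct s x) := by
  rcases x with _ | ⟨_, _⟩ <;> simp [liftColor]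

lemma liftColor_ne_inr_last (x : Sym t k) (b : Bool) : liftColor x ≠ .inr (Fin.last k, b) := by
  rcases x with _ | ⟨j, _⟩ <;> simp [liftColor, Fin.castSucc_ne_last]

lemma symColorable_succ_of_isNegativeOn {σ : Sym2 V → Bool} {T : Set V} (hT : IsNegativeOn σ T)
    (h : SymColorable (⊤ : SimpleGraph ↥Tᶜ) (restrict σ Tᶜ) t k) :
    SymColorable (⊤ : SimpleGraph V) σ t (k + 1) := by
  classical
  obtain ⟨X, hX⟩ := hT
  obtain ⟨c, hc⟩ := h
  refine ⟨fun v => if hv : v ∈ T then .inr (Fin.last k, X v) else liftColor (c ⟨v, hv⟩), ?_⟩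
  intro v w hvw
  by_cases hv : v ∈ T <;> by_cases hw : w ∈ T <;>
    simp only [hv, hw, dite_true, dite_false, signAct_liftColor, signAct_inr]
  · rw [hX hv hw hvw.ne]
    cases X v <;> cases X w <;> simp
  · exact (liftColor_ne_inr_last _ _).symm
  · exact liftColor_ne_inr_last _ _
  · exact liftColor_injective.ne (hc (v := ⟨v, hv⟩) (w := ⟨w, hw⟩) (by simpa using hvw.ne))

lemma symColorable_zero_of_card_le [Fintype V] (σ : Sym2 V → Bool) (h : Fintype.card V ≤ t) :
    SymColorable (⊤ : SimpleGraph V) σ t 0 := by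
  obtain ⟨f⟩ := Function.Embedding.nonempty_of_card_le (h.trans (Fintype.card_fin t).ge)
  exact ⟨fun v => .inl (f v), fun v w hvw => by simpa using hvw.ne⟩

/-- Colour greedily, spending each pair of colours on two vertices. -/
lemma symColorable_of_card_le [Fintype V] (σ : Sym2 V → Bool) (h : Fintype.card V ≤ t + 2 * k) :
    SymColorable (⊤ : SimpleGraph V) σ t k := by
  induction k generalizing V with
  | zero => exact symColorable_zero_of_card_le σ h
  | succ k ih =>
    classical
    obtain ⟨T, -, hT⟩ := Finset.exists_subset_card_eq
      (s := (Finset.univ : Finset V)) (min_le_right 2 (Fintype.card V))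
    refine symColorable_succ_of_isNegativeOn
      (isNegativeOn_of_card_le_two σ (hT ▸ min_le_left _ _)) (ih _ ?_)
    simp only [Fintype.card_compl_set, Finset.coe_sort_coe, Fintype.card_coe, hT]
    omega

lemma symColorable_succ_of_triangleSign_eq_false [Fintype V] {σ : Sym2 V → Bool} {a b c : V}
    (hab : a ≠ b) (hac : a ≠ c) (hbc : b ≠ c) (hneg : triangleSign σ a b c = false)
    (h : Fintype.card V ≤ t + 2 * k + 3) : SymColorable (⊤ : SimpleGraph V) σ t (k + 1) := by
  classical
  have hT : IsNegativeOn σ (({a, b, c} : Finset V) : Set V) := by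
    simpa using isNegativeOn_of_triangleSign_eq_false hab hac hbc hneg
  refine symColorable_succ_of_isNegativeOn hT (symColorable_of_card_le _ ?_)
  simp only [Fintype.card_compl_set, Finset.coe_sort_coe, Fintype.card_coe,
    Finset.card_eq_three.mpr ⟨a, b, c, hab, hac, hbc, rfl⟩]
  omega

lemma symChromT_le {G : SimpleGraph V} {σ : Sym2 V → Bool} (h : SymColorable G σ t k) :
    symChromT G σ t ≤ t + 2 * k :=
  Nat.sInf_le ⟨k, rfl, h⟩

lemma exists_symChromT_eq {G : SimpleGraph V} {σ : Sym2 V → Bool} (h : SymColorable G σ t k) :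
    ∃ k', symChromT G σ t = t + 2 * k' ∧ SymColorable G σ t k' :=
  Nat.sInf_mem (s := {m | ∃ k, m = t + 2 * k ∧ SymColorable G σ t k}) ⟨_, k, rfl, h⟩

theorem stmt7_general (n : ℕ) (σ : Sym2 (Fin n) → Bool) (t : ℕ)
    (ht : t ≤ n) :
    (Odd ((n : ℤ) - 1 - t) →
      symChromT (⊤ : SimpleGraph (Fin n)) σ t ≤ (n - 1) + 1) ∧
    (Even ((n : ℤ) - 1 - t) →
      (symChromT (⊤ : SimpleGraph (Fin n)) σ t = (n - 1) + 2 ∨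
        symChromT (⊤ : SimpleGraph (Fin n)) σ t ≤ n - 1) ∧
      (symChromT (⊤ : SimpleGraph (Fin n)) σ t = (n - 1) + 2 ↔
        Equivalent (⊤ : SimpleGraph (Fin n)) σ (fun _ => true) ∨ t = n - 1)) := by
  have hupper : SymColorable (⊤ : SimpleGraph (Fin n)) σ t ((n - t + 1) / 2) :=
    symColorable_of_card_le σ (by rw [Fintype.card_fin]; omega)
  have hχ_le := symChromT_le hupper
  obtain ⟨k, hχ, hk⟩ := exists_symChromT_eq hupper
  refine ⟨fun hodd => by rw [Int.odd_iff] at hodd; omega, fun heven => ?_⟩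
  rw [Int.even_iff] at heven
  by_cases hE : Equivalent (⊤ : SimpleGraph (Fin n)) σ (fun _ => true) ∨ t = n - 1
  · have hn_le : n ≤ t + 2 * k := by
      rcases hE with hσ | rfl
      · simpa using card_le_of_symColorable_of_equivalent_top hσ hk
      · rcases k with _ | k
        · simpa using card_le_of_symColorable_zero hk
        · omega
    exact ⟨Or.inl (by omega), iff_of_true (by omega) hE⟩
  · obtain ⟨a, b, c, hab, hac, hbc, hneg⟩ :
        ∃ a b c : Fin n, a ≠ b ∧ a ≠ c ∧ b ≠ c ∧ triangleSign σ a b c = false := by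
      by_contra! h
      exact hE (Or.inl (equivalent_top_iff_triangleSign_eq_true.mpr fun a b c hab hac hbc => by
        simpa using h a b c hab hac hbc))
    have hχ_le' := symChromT_le (symColorable_succ_of_triangleSign_eq_false
      (t := t) (k := (n - t - 3) / 2) hab hac hbc hneg (by rw [Fintype.card_fin]; omega))
    exact ⟨Or.inr (by omega), iff_of_false (by omega) hE⟩

/-- Brooks' type theorem for complete graphs.
For `K_n` with `n ≥ 3`, `Δ(K_n) = n - 1` and `t ∈ {0, …, n}`:
if `Δ(K_n) - t` is odd then `χ^t_sym(K_n,σ) ≤ Δ(K_n) + 1`;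
if `Δ(K_n) - t` is even then `χ^t_sym(K_n,σ) = Δ(K_n) + 2` or
`χ^t_sym(K_n,σ) ≤ Δ(K_n)`, and `χ^t_sym(K_n,σ) = Δ(K_n) + 2` iff
`(K_n,σ)` is switching-equivalent to `(K_n, +1)` or `t = n - 1`. -/
theorem stmt7 (n : ℕ) (hn : 3 ≤ n) (σ : Sym2 (Fin n) → Bool) (t : ℕ)
    (ht : t ≤ n) :
    (Odd ((n : ℤ) - 1 - t) →
      symChromT (⊤ : SimpleGraph (Fin n)) σ t ≤ (n - 1) + 1) ∧
    (Even ((n : ℤ) - 1 - t) →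
      (symChromT (⊤ : SimpleGraph (Fin n)) σ t = (n - 1) + 2 ∨
        symChromT (⊤ : SimpleGraph (Fin n)) σ t ≤ n - 1) ∧
      (symChromT (⊤ : SimpleGraph (Fin n)) σ t = (n - 1) + 2 ↔
        Equivalent (⊤ : SimpleGraph (Fin n)) σ (fun _ => true) ∨ t = n - 1)) :=
  stmt7_general n σ t ht

end SymSet
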